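/- The Artin–Hasse map E, sending a Witt vector a = (a_i) over a ℤ_(p)-algebra A to the product E(a) = Π_{i≥0} AH(a_i x^{p^i}) in the group 1 + x·A[[x]], is a group homomorphism from the additive group of W(A) to the multiplicative group Λ(A) = 1 + x·A[[x]]; equivalently E(a) = exp(Σ_{n≥0} fant_n(a) p^{-n} x^{p^n}), and it satisfies E(a + b) = E(a)·E(b) and E(V(a)) = E(a) ∘ x^p. -/

import Mathlib

/-!
Over a `ℚ`-algebra the Artin–Hasse series is `exp ∘ ℓ` with `ℓ = ahLog p = ∑ₙ X^{pⁿ}/pⁿ`, and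
`exp` turns sums of series without constant term into products. Hence
`E(x) = exp (∑ᵢ ℓ(xᵢ X^{pⁱ})) = exp (∑ₙ fantₙ(x) p⁻ⁿ X^{pⁿ})`, and both identities follow from
`fantₙ(x + y) = fantₙ(x) + fantₙ(y)` and `fantₙ₊₁(V x) = p · fantₙ(x)`. A general `ℤ_(p)`-algebra is
reached by naturality of `E`: every Witt vector is the image of one over a polynomial ring over
`ℤ_(p)`, and that ring embeds into the polynomial ring over `ℚ`.
-/

open PowerSeries

/-- Formal composition `f ∘ g` of power series (valid when `g` has zero constant term):
the `k`-th coefficient is that of `∑_{j ≤ k} f_j g^j`. -/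
noncomputable def psComp {R : Type*} [CommRing R] (f g : PowerSeries R) : PowerSeries R :=
  PowerSeries.mk fun k =>
    PowerSeries.coeff (R := R) k (∑ j ∈ Finset.range (k + 1), PowerSeries.C (R := R) (PowerSeries.coeff (R := R) j f) * g ^ j)

/-- The ring `ℤ_(p) = ℤ_p ∩ ℚ`, realized as a subring of `ℚ`. -/
noncomputable def ZpRat (p : ℕ) [Fact p.Prime] : Subring ℚ :=
  (PadicInt.subring p).comap (Rat.castHom ℚ_[p])

open scoped Classical

/-- The series `∑_{n ≥ 0} x^{pⁿ}/pⁿ` over `ℚ` (its coefficient at `k = pⁿ` is `1/k`). -/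
noncomputable def ahLog (p : ℕ) : PowerSeries ℚ :=
  PowerSeries.mk fun k => if ∃ n : ℕ, k = p ^ n then (1 : ℚ) / k else 0

/-- The Artin–Hasse exponential of a Witt vector `a` over a `ℤ_(p)`-algebra `A`:
`E(a) = ∏_{i ≥ 0} AH(aᵢ x^{pⁱ})`.  (The `k`-th coefficient of the infinite product is
that of the finite product of the factors with `i ≤ k`, the remaining factors being
`≡ 1 mod x^{k+1}`.) -/
noncomputable def artinHasseExp {p : ℕ} [Fact p.Prime] {A : Type*} [CommRing A]
    [Algebra (ZpRat p) A] (AH : PowerSeries (ZpRat p)) (a : WittVector p A) :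
    PowerSeries A :=
  PowerSeries.mk fun k => PowerSeries.coeff (R := A) k
    (∏ i ∈ Finset.range (k + 1),
      psComp (PowerSeries.map (algebraMap (ZpRat p) A) AH)
        (PowerSeries.C (R := A) (a.coeff i) * PowerSeries.X ^ p ^ i))

section Substitution

variable {R : Type*} [CommRing R]

theorem coeff_pow_eq_zero_of_lt {g : R⟦X⟧} (hg : constantCoeff g = 0) {k d : ℕ} (h : k < d) :
    coeff k (g ^ d) = 0 :=
  X_pow_dvd_iff.mp (pow_dvd_pow_of_dvd (X_dvd_iff.mpr hg) d) k h

theorem coeff_subst_eq_sum {g : R⟦X⟧} (hg : constantCoeff g = 0) (f : R⟦X⟧) (k : ℕ) :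
    coeff k (f.subst g) = ∑ j ∈ Finset.range (k + 1), coeff j f * coeff k (g ^ j) := by
  rw [coeff_subst' (HasSubst.of_constantCoeff_zero' hg),
    finsum_eq_sum_of_support_subset _ (s := Finset.range (k + 1))]
  · rfl
  · intro d hd
    by_contra hdk
    simp only [Finset.coe_range, Set.mem_Iio, not_lt] at hdk
    exact hd (by simp [coeff_pow_eq_zero_of_lt hg (show k < d by omega)])

theorem psComp_eq_subst {g : R⟦X⟧} (hg : constantCoeff g = 0) (f : R⟦X⟧) :
    psComp f g = f.subst g := by
  ext k
  simp [psComp, coeff_subst_eq_sum hg, coeff_C_mul]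

theorem map_psComp {S : Type*} [CommRing S] (φ : R →+* S) (f g : R⟦X⟧) :
    map φ (psComp f g) = psComp (map φ f) (map φ g) := by
  ext k
  simp [psComp, coeff_map, map_sum, coeff_C_mul, ← map_pow]

theorem map_subst_of_constantCoeff_zero {S : Type*} [CommRing S] (φ : R →+* S)
    {g : R⟦X⟧} (hg : constantCoeff g = 0) (f : R⟦X⟧) :
    map φ (f.subst g) = (map φ f).subst (map φ g) :=
  map_subst (HasSubst.of_constantCoeff_zero' hg) f

theorem coeff_subst_congr {g g' : R⟦X⟧} (hg : constantCoeff g = 0) (hg' : constantCoeff g' = 0)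
    {k : ℕ} (h : trunc (k + 1) g = trunc (k + 1) g') (f : R⟦X⟧) :
    coeff k (f.subst g) = coeff k (f.subst g') := by
  rw [coeff_subst_eq_sum hg, coeff_subst_eq_sum hg']
  refine Finset.sum_congr rfl fun j _ => ?_
  rw [← coeff_coe_trunc_of_lt k.lt_succ_self, ← trunc_trunc_pow, h, trunc_trunc_pow,
    coeff_coe_trunc_of_lt k.lt_succ_self]

theorem subst_C_mul_X_pow {q : ℕ} (hq : q ≠ 0) (c : R) (f : R⟦X⟧) :
    f.subst (C c * X ^ q) = (rescale c f).subst (X ^ q) := by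
  rw [rescale_eq_subst, subst_comp_subst_apply (HasSubst.of_constantCoeff_zero' (by simp))
    (HasSubst.X_pow hq), subst_smul (HasSubst.X_pow hq), subst_X (HasSubst.X_pow hq),
    smul_eq_C_mul]

theorem coeff_subst_C_mul_X_pow {q : ℕ} (hq : q ≠ 0) (c : R) (f : R⟦X⟧) (m : ℕ) :
    coeff m (f.subst (C c * X ^ q)) = if q ∣ m then c ^ (m / q) * coeff (m / q) f else 0 := by
  simp [subst_C_mul_X_pow hq, coeff_subst_X_pow hq, coeff_rescale]

end Substitution

section Exp

variable {B : Type*} [CommRing B] [Algebra ℚ B]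

theorem exp_subst_X_add_X :
    (exp B).subst (MvPowerSeries.X 0 + MvPowerSeries.X 1 : MvPowerSeries (Fin 2) B) =
      (exp B).subst (MvPowerSeries.X 0 : MvPowerSeries (Fin 2) B) *
        (exp B).subst (MvPowerSeries.X 1 : MvPowerSeries (Fin 2) B) := by
  ext e
  rw [coeff_subst_X_zero_add_X_one, coeff_subst_X_zero_subst_mul_X_one]
  simp only [coeff_exp, ← map_natCast (algebraMap ℚ B), ← map_mul]
  congr 1
  have h := Nat.choose_mul_factorial_mul_factorial (Nat.le_add_right (e 0) (e 1))
  rw [Nat.add_sub_cancel_left] at h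
  field_simp
  exact_mod_cast h

theorem exp_subst_add {f g : B⟦X⟧} (hf : constantCoeff f = 0) (hg : constantCoeff g = 0) :
    (exp B).subst (f + g) = (exp B).subst f * (exp B).subst g := by
  have hfg : MvPowerSeries.HasSubst ![f, g] :=
    MvPowerSeries.hasSubst_of_constantCoeff_zero (by simpa [Fin.forall_fin_two] using ⟨hf, hg⟩)
  have subst_exp_subst {a : MvPowerSeries (Fin 2) B} (ha : MvPowerSeries.constantCoeff a = 0) :
      MvPowerSeries.subst ![f, g] ((exp B).subst a) =
        (exp B).subst (MvPowerSeries.subst ![f, g] a) :=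
    MvPowerSeries.subst_comp_subst_apply (HasSubst.of_constantCoeff_zero ha).const hfg _
  have := congrArg (MvPowerSeries.subst (R := B) ![f, g]) exp_subst_X_add_X
  rw [← MvPowerSeries.coe_substAlgHom hfg, map_mul, MvPowerSeries.coe_substAlgHom,
    subst_exp_subst (by simp), subst_exp_subst (by simp), subst_exp_subst (by simp)] at this
  simpa [MvPowerSeries.subst_add hfg, MvPowerSeries.subst_X hfg] using this

theorem exp_subst_sum {ι : Type*} (s : Finset ι) {f : ι → B⟦X⟧}
    (hf : ∀ i ∈ s, constantCoeff (f i) = 0) :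
    (exp B).subst (∑ i ∈ s, f i) = ∏ i ∈ s, (exp B).subst (f i) := by
  classical
  induction s using Finset.induction_on with
  | empty => simp [subst_zero_eq_C_constantCoeff]
  | insert i s hi ih =>
    rw [Finset.sum_insert hi, Finset.prod_insert hi, exp_subst_add (hf i (by simp))
      (by simpa [map_sum] using Finset.sum_eq_zero fun j hj => hf j (by simp [hj])),
      ih fun j hj => hf j (by simp [hj])]

end Exp

section AhLog

variable {p : ℕ}

theorem coeff_ahLog_pow (n : ℕ) : coeff (p ^ n) (ahLog p) = 1 / (p : ℚ) ^ n := by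
  simp [ahLog]

theorem coeff_ahLog_of_not_pow {k : ℕ} (hk : ¬∃ n, k = p ^ n) : coeff k (ahLog p) = 0 := by
  simp [ahLog, hk]

theorem constantCoeff_ahLog (hp : p ≠ 0) : constantCoeff (ahLog p) = 0 := by
  rw [← coeff_zero_eq_constantCoeff_apply]
  exact coeff_ahLog_of_not_pow fun ⟨n, hn⟩ => pow_ne_zero n hp hn.symm

theorem coeff_ahLog_mul_self (hp : 1 < p) (j : ℕ) :
    coeff (p * j) (ahLog p) * p = coeff j (ahLog p) := by
  by_cases hj : ∃ n, j = p ^ n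
  · obtain ⟨n, rfl⟩ := hj
    rw [← pow_succ', coeff_ahLog_pow, coeff_ahLog_pow]
    field_simp
    ring
  · rw [coeff_ahLog_of_not_pow hj, coeff_ahLog_of_not_pow, zero_mul]
    rintro ⟨_ | n, hn⟩
    · exact hp.ne' (Nat.eq_one_of_mul_eq_one_right hn)
    · exact hj ⟨n, Nat.eq_of_mul_eq_mul_left (by omega) (hn.trans (pow_succ' p n))⟩

/-- `ahLog p (c X^{pⁱ}) = ∑ₜ c^{pᵗ} X^{p^{i+t}} / pᵗ`, written with the coefficient `1 / m` of
`ahLog p` at `m = p^{i+t}` factored out. -/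
theorem coeff_ahLog_subst_C_mul_X_pow {B : Type*} [CommRing B] [Algebra ℚ B] (hp : 1 < p)
    (c : B) (i m : ℕ) :
    coeff m ((map (algebraMap ℚ B) (ahLog p)).subst (C c * X ^ p ^ i)) =
      algebraMap ℚ B (coeff m (ahLog p) * p ^ i) *
        if i ≤ Nat.log p m then c ^ p ^ (Nat.log p m - i) else 0 := by
  rw [coeff_subst_C_mul_X_pow (pow_ne_zero i (by omega)), coeff_map]
  by_cases hm : ∃ n, m = p ^ n
  · obtain ⟨n, rfl⟩ := hm
    rw [Nat.log_pow hp]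
    by_cases hin : i ≤ n
    · rw [if_pos (pow_dvd_pow p hin), if_pos hin, Nat.pow_div hin (by omega), coeff_ahLog_pow,
        coeff_ahLog_pow, mul_comm]
      congr 2
      rw [pow_sub₀ _ (by positivity) hin]
      field_simp
    · rw [if_neg (mt (Nat.pow_dvd_pow_iff_le_right hp).mp hin), if_neg hin, mul_zero]
  · rw [coeff_ahLog_of_not_pow hm, zero_mul, map_zero, zero_mul]
    split_ifs with hd
    · rw [coeff_ahLog_of_not_pow, map_zero, mul_zero]
      rintro ⟨t, ht⟩
      exact hm ⟨i + t, by rw [pow_add, ← ht, Nat.mul_div_cancel' hd]⟩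
    · rfl

end AhLog

section Ghost

open WittVector

variable {p : ℕ} [hp : Fact p.Prime] {B : Type*} [CommRing B] [Algebra ℚ B]

/-- The series `∑ₙ fantₙ(x) p⁻ⁿ X^{pⁿ}` (the coefficients of `ahLog p` vanish away from the
powers of `p`). -/
noncomputable def ghostSeries (x : WittVector p B) : B⟦X⟧ :=
  mk fun k => algebraMap ℚ B (coeff k (ahLog p)) * ghostComponent (Nat.log p k) x

theorem coeff_ghostSeries (x : WittVector p B) (k : ℕ) :
    coeff k (ghostSeries x) =
      algebraMap ℚ B (coeff k (ahLog p)) * ghostComponent (Nat.log p k) x :=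
  coeff_mk _ _

theorem constantCoeff_ghostSeries (x : WittVector p B) : constantCoeff (ghostSeries x) = 0 := by
  rw [← coeff_zero_eq_constantCoeff_apply, coeff_ghostSeries, coeff_zero_eq_constantCoeff_apply,
    constantCoeff_ahLog hp.out.ne_zero, map_zero, zero_mul]

theorem ghostSeries_add (x y : WittVector p B) :
    ghostSeries (x + y) = ghostSeries x + ghostSeries y := by
  ext k
  simp only [map_add, coeff_ghostSeries, mul_add]

theorem ghostSeries_verschiebung (x : WittVector p B) :
    ghostSeries (verschiebung x) = (ghostSeries x).subst (X ^ p) := by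
  ext k
  rw [coeff_subst_X_pow hp.out.ne_zero, coeff_ghostSeries, coeff_ghostSeries,
    Algebra.algebraMap_self, RingHom.id_apply]
  split_ifs with hk
  · obtain ⟨j, rfl⟩ := hk
    rw [Nat.mul_div_cancel_left _ hp.out.pos]
    rcases eq_or_ne j 0 with rfl | hj
    · simp [constantCoeff_ahLog hp.out.ne_zero]
    rw [mul_comm p j, Nat.log_mul_base hp.out.one_lt hj, ghostComponent_verschiebung, ← mul_assoc,
      ← map_natCast (algebraMap ℚ B), ← map_mul, mul_comm j, coeff_ahLog_mul_self hp.out.one_lt]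
  · by_cases hk1 : k = 1
    · rw [hk1, Nat.log_one_right, ghostComponent_zero_verschiebung, mul_zero]
    rw [coeff_ahLog_of_not_pow, map_zero, zero_mul]
    rintro ⟨_ | n, rfl⟩
    · exact hk1 (pow_zero p)
    · exact hk (dvd_pow_self p n.succ_ne_zero)

theorem coeff_sum_ahLog_subst (x : WittVector p B) {m N : ℕ} (hm : m < N) :
    coeff m (∑ i ∈ Finset.range N,
      (map (algebraMap ℚ B) (ahLog p)).subst (C (x.coeff i) * X ^ p ^ i)) =
        coeff m (ghostSeries x) := by
  have hlog : Nat.log p m + 1 ≤ N := by have := Nat.log_le_self p m; omega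
  simp only [map_sum, coeff_ahLog_subst_C_mul_X_pow hp.out.one_lt, coeff_ghostSeries,
    ghostComponent_apply, aeval_wittPolynomial, Finset.mul_sum, map_mul, mul_assoc]
  rw [← Finset.sum_subset (Finset.range_subset_range.mpr hlog)]
  · refine Finset.sum_congr rfl fun i hi => ?_
    rw [if_pos (Nat.lt_succ_iff.mp (Finset.mem_range.mp hi)), map_pow, map_natCast]
  · intro i _ hi
    rw [if_neg (by simpa using hi), mul_zero, mul_zero]

end Ghost

section ArtinHasse

open WittVector

variable {p : ℕ} [hp : Fact p.Prime] {A : Type*} [CommRing A] [Algebra (ZpRat p) A]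

theorem coeff_artinHasseExp (AH : PowerSeries (ZpRat p)) (x : WittVector p A) (k : ℕ) :
    coeff k (artinHasseExp AH x) = coeff k (∏ i ∈ Finset.range (k + 1),
      (map (algebraMap (ZpRat p) A) AH).subst (C (x.coeff i) * X ^ p ^ i)) := by
  simp [artinHasseExp, psComp_eq_subst, hp.out.ne_zero]

theorem artinHasseExp_map {A' : Type*} [CommRing A'] [Algebra (ZpRat p) A']
    (AH : PowerSeries (ZpRat p)) (f : A →ₐ[ZpRat p] A') (x : WittVector p A) :
    map (f : A →+* A') (artinHasseExp AH x) =
      artinHasseExp AH (WittVector.map (f : A →+* A') x) := by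
  ext k
  rw [coeff_map, coeff_artinHasseExp, coeff_artinHasseExp, ← coeff_map, map_prod]
  refine congrArg _ (Finset.prod_congr rfl fun i _ => ?_)
  rw [map_subst_of_constantCoeff_zero _ (by simp [hp.out.ne_zero]), ← RingHom.comp_apply,
    ← map_comp, AlgHom.comp_algebraMap]
  simp

theorem exists_wittVector_map_eq {ι : Type} (x : ι → WittVector p A) :
    ∃ (f : MvPolynomial (ι × ℕ) (ZpRat p) →ₐ[ZpRat p] A)
      (x₀ : ι → WittVector p (MvPolynomial (ι × ℕ) (ZpRat p))),
      ∀ j, WittVector.map (f : _ →+* A) (x₀ j) = x j :=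
  ⟨MvPolynomial.aeval fun s => (x s.1).coeff s.2, fun j => mk p fun n => MvPolynomial.X (j, n),
    fun j => by ext; simp⟩

theorem mvPolynomial_mapAlgHom_ofId_injective (σ : Type*) :
    Function.Injective (MvPolynomial.mapAlgHom (σ := σ) (Algebra.ofId (ZpRat p) ℚ)) :=
  MvPolynomial.map_injective _ Subtype.val_injective

variable {AH : PowerSeries (ZpRat p)}

theorem constantCoeff_artinHasseExp (hAH : map (ZpRat p).subtype AH = psComp (exp ℚ) (ahLog p))
    (x : WittVector p A) : constantCoeff (artinHasseExp AH x) = 1 := by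
  have h0 : constantCoeff AH = 1 := by
    have := congrArg PowerSeries.constantCoeff hAH
    simp only [← coeff_zero_eq_constantCoeff_apply, coeff_map, psComp] at this
    exact Subtype.ext (by simpa using this)
  rw [← coeff_zero_eq_constantCoeff_apply, coeff_artinHasseExp]
  simp [coeff_subst_eq_sum, h0]

section RatAlgebra

variable {B : Type*} [CommRing B] [Algebra ℚ B] [Algebra (ZpRat p) B] [IsScalarTower (ZpRat p) ℚ B]

theorem map_algebraMap_eq_exp_subst (hAH : map (ZpRat p).subtype AH = psComp (exp ℚ) (ahLog p)) :
    map (algebraMap (ZpRat p) B) AH = (exp B).subst (map (algebraMap ℚ B) (ahLog p)) := by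
  rw [IsScalarTower.algebraMap_eq (ZpRat p) ℚ B, map_comp, RingHom.comp_apply,
    show algebraMap (ZpRat p) ℚ = (ZpRat p).subtype from rfl, hAH, psComp_eq_subst (constantCoeff_ahLog hp.out.ne_zero),
    map_subst_of_constantCoeff_zero _ (constantCoeff_ahLog hp.out.ne_zero), map_exp]

theorem artinHasseExp_eq_exp_subst_ghostSeries
    (hAH : map (ZpRat p).subtype AH = psComp (exp ℚ) (ahLog p)) (x : WittVector p B) :
    artinHasseExp AH x = (exp B).subst (ghostSeries x) := by
  have hmono (i : ℕ) : constantCoeff (C (x.coeff i) * X ^ p ^ i : B⟦X⟧) = 0 := by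
    simp [hp.out.ne_zero]
  have hlog : constantCoeff (map (algebraMap ℚ B) (ahLog p)) = 0 := by
    rw [← coeff_zero_eq_constantCoeff_apply, coeff_map, coeff_zero_eq_constantCoeff_apply,
      constantCoeff_ahLog hp.out.ne_zero, map_zero]
  ext k
  rw [coeff_artinHasseExp, map_algebraMap_eq_exp_subst hAH]
  simp_rw [subst_comp_subst_apply (HasSubst.of_constantCoeff_zero' hlog)
    (HasSubst.of_constantCoeff_zero' (hmono _))]
  rw [← exp_subst_sum _ fun i _ => constantCoeff_subst_eq_zero (hmono i) _ hlog]
  refine coeff_subst_congr ?_ (constantCoeff_ghostSeries x) ?_ _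
  · exact (map_sum _ _ _).trans
      (Finset.sum_eq_zero fun i _ => constantCoeff_subst_eq_zero (hmono i) _ hlog)
  · ext m
    simp only [coeff_trunc]
    split_ifs with hm
    · exact coeff_sum_ahLog_subst x hm
    · rfl

theorem artinHasseExp_add_of_algebra_rat
    (hAH : map (ZpRat p).subtype AH = psComp (exp ℚ) (ahLog p)) (x y : WittVector p B) :
    artinHasseExp AH (x + y) = artinHasseExp AH x * artinHasseExp AH y := by
  simp only [artinHasseExp_eq_exp_subst_ghostSeries hAH, ghostSeries_add,
    exp_subst_add (constantCoeff_ghostSeries x) (constantCoeff_ghostSeries y)]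

theorem artinHasseExp_verschiebung_of_algebra_rat
    (hAH : map (ZpRat p).subtype AH = psComp (exp ℚ) (ahLog p)) (x : WittVector p B) :
    artinHasseExp AH (verschiebung x) = psComp (artinHasseExp AH x) (X ^ p) := by
  rw [artinHasseExp_eq_exp_subst_ghostSeries hAH, artinHasseExp_eq_exp_subst_ghostSeries hAH,
    ghostSeries_verschiebung, psComp_eq_subst (by simp [hp.out.ne_zero]),
    subst_comp_subst_apply (HasSubst.of_constantCoeff_zero' (constantCoeff_ghostSeries x))
      (HasSubst.X_pow hp.out.ne_zero)]

theorem artinHasseExp_add_of_injective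
    (hAH : map (ZpRat p).subtype AH = psComp (exp ℚ) (ahLog p)) {ι : A →ₐ[ZpRat p] B}
    (hι : Function.Injective ι) (x y : WittVector p A) :
    artinHasseExp AH (x + y) = artinHasseExp AH x * artinHasseExp AH y := by
  apply PowerSeries.map_injective (ι : A →+* B) hι
  rw [map_mul, artinHasseExp_map, artinHasseExp_map, artinHasseExp_map, map_add,
    artinHasseExp_add_of_algebra_rat hAH]

theorem artinHasseExp_verschiebung_of_injective
    (hAH : map (ZpRat p).subtype AH = psComp (exp ℚ) (ahLog p)) {ι : A →ₐ[ZpRat p] B}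
    (hι : Function.Injective ι) (x : WittVector p A) :
    artinHasseExp AH (verschiebung x) = psComp (artinHasseExp AH x) (X ^ p) := by
  apply PowerSeries.map_injective (ι : A →+* B) hι
  rw [map_psComp, artinHasseExp_map, artinHasseExp_map, map_verschiebung,
    artinHasseExp_verschiebung_of_algebra_rat hAH, map_pow, map_X]

end RatAlgebra

theorem artinHasseExp_add (hAH : map (ZpRat p).subtype AH = psComp (exp ℚ) (ahLog p))
    (x y : WittVector p A) :
    artinHasseExp AH (x + y) = artinHasseExp AH x * artinHasseExp AH y := by
  obtain ⟨f, x₀, hx₀⟩ := exists_wittVector_map_eq ![x, y]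
  obtain ⟨rfl, rfl⟩ : _ = x ∧ _ = y := ⟨hx₀ 0, hx₀ 1⟩
  rw [← map_add, ← artinHasseExp_map,
    artinHasseExp_add_of_injective hAH (mvPolynomial_mapAlgHom_ofId_injective _), map_mul,
    artinHasseExp_map, artinHasseExp_map]

theorem artinHasseExp_verschiebung (hAH : map (ZpRat p).subtype AH = psComp (exp ℚ) (ahLog p))
    (x : WittVector p A) :
    artinHasseExp AH (verschiebung x) = psComp (artinHasseExp AH x) (X ^ p) := by
  obtain ⟨f, x₀, hx₀⟩ := exists_wittVector_map_eq fun _ : Unit => x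
  obtain rfl : _ = x := hx₀ ()
  rw [← map_verschiebung, ← artinHasseExp_map,
    artinHasseExp_verschiebung_of_injective hAH (mvPolynomial_mapAlgHom_ofId_injective _), map_psComp,
    artinHasseExp_map, map_pow, map_X]

end ArtinHasse

/-- The Artin–Hasse map `E`, sending a Witt vector `a` over a `ℤ_(p)`-algebra `A` to
`E(a) = ∏ᵢ AH(aᵢ x^{pⁱ})`, is a homomorphism from the additive group `W(A)` to the
multiplicative group `Λ(A) = 1 + x·A[[x]]`: `E(a)` has constant term `1`,
`E(a + b) = E(a)·E(b)`, and moreover `E(V(a)) = E(a) ∘ x^p`.  Here `AH` is the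
Artin–Hasse series `exp(∑ x^{pⁿ}/pⁿ)`, which has coefficients in `ℤ_(p)`. -/
theorem artinHasseExp_hom (p : ℕ) [Fact p.Prime] (A : Type*) [CommRing A]
    [Algebra (ZpRat p) A] (AH : PowerSeries (ZpRat p))
    (hAH : PowerSeries.map (ZpRat p).subtype AH = psComp (PowerSeries.exp ℚ) (ahLog p))
    (a b : WittVector p A) :
    PowerSeries.constantCoeff (R := A) (artinHasseExp AH a) = 1 ∧
    artinHasseExp AH (a + b) = artinHasseExp AH a * artinHasseExp AH b ∧
    artinHasseExp AH (WittVector.verschiebung a) =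
      psComp (artinHasseExp AH a) (PowerSeries.X ^ p) :=
  ⟨constantCoeff_artinHasseExp hAH a, artinHasseExp_add hAH a b,
    artinHasseExp_verschiebung hAH a⟩
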